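/- arXiv:1602.00996 — 6 statements merged into one kernel-verified Lean document; each statement's English description precedes it below -/
import Mathlib

section
/- Let μ ∈ ℂ, n ≥ 1 and V = ℂ[z]^n. The assignment (φ₋₁, φ₁) ↦ φ₁ is a bijection from the set of Casimir representations of semi-level μ on V onto the set of φ ∈ End₁(V) that are injective and satisfy π_μ(z+1)·w ∈ φ(V) for every w ∈ V (this condition states that the n-th invariant factor of the matrix of φ divides π_μ(z+1)). In particular, for each such φ there exists a unique φ₋₁ ∈ End₋₁(V) with φ₋₁∘φ = multiplication by π_μ(z) and φ∘φ₋₁ = multiplication by π_μ(z+1). -/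
/- Since `φ₁` is injective, `φ₋₁` is forced to be `φ₁⁻¹ ∘ π_μ(z+1)·`, which is defined exactly when
`π_μ(z+1)·V ⊆ φ₁(V)`. After applying the injective `φ₁`, the `∇⁻¹`-semilinearity of `φ₋₁` and the
identity `φ₋₁ ∘ φ₁ = π_μ(z)·` both reduce to the `∇`-semilinearity of `φ₁`. Conversely `φ₁` is
injective because `φ₋₁ ∘ φ₁ = π_μ(z)·` and `π_μ ≠ 0` acts injectively on `ℂ[z]^n`. -/

open Polynomial

/-- The shift automorphism `∇ : ℂ[z] → ℂ[z]`, `p(z) ↦ p(z+1)`. -/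
noncomputable def nabla : Polynomial ℂ ≃ₐ[ℂ] Polynomial ℂ := algEquivAevalXAddC 1

/-- `End_k(V)`: additive endomorphisms with `φ(p • v) = (∇^k p) • φ(v)`. -/
def IsSemilinearEnd {M : Type*} [AddCommMonoid M] [Module (Polynomial ℂ) M]
    (k : ℤ) (φ : M → M) : Prop :=
  (∀ v w : M, φ (v + w) = φ v + φ w) ∧
  ∀ (p : Polynomial ℂ) (v : M), φ (p • v) = ((nabla ^ k) p) • φ v

/-- `π_μ(z) = (z+μ)(z-μ-1)`. -/
noncomputable def piMu (μ : ℂ) : Polynomial ℂ := (X + C μ) * (X - C μ - 1)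

/-- A Casimir representation of semi-level `μ` on a `ℂ[z]`-module `M`:
a pair `(φ₋₁, φ₁)` of semilinear endomorphisms of degrees `-1` and `1` with
`φ₋₁ ∘ φ₁ = π_μ(z)·` and `φ₁ ∘ φ₋₁ = π_μ(z+1)·`. -/
def IsCasimirRep {M : Type*} [AddCommMonoid M] [Module (Polynomial ℂ) M]
    (μ : ℂ) (φm φp : M → M) : Prop :=
  IsSemilinearEnd (-1) φm ∧ IsSemilinearEnd 1 φp ∧
  (∀ v, φm (φp v) = piMu μ • v) ∧
  (∀ v, φp (φm v) = (nabla (piMu μ)) • v)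

lemma piMu_ne_zero (μ : ℂ) : piMu μ ≠ 0 := by
  have h : (X - C μ - 1 : ℂ[X]) = X - C (μ + 1) := by
    simp only [map_add, map_one]
    ring
  exact mul_ne_zero (X_add_C_ne_zero μ) (h ▸ X_sub_C_ne_zero (μ + 1))

lemma nabla_zpow_apply_nabla_zpow_neg_apply (k : ℤ) (p : ℂ[X]) :
    (nabla ^ k) ((nabla ^ (-k)) p) = p := by
  rw [← AlgEquiv.mul_apply, ← zpow_add, add_neg_cancel, zpow_zero, AlgEquiv.one_apply]

section

variable {M : Type*} [AddCommMonoid M] [Module ℂ[X] M]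

namespace IsSemilinearEnd

variable {k : ℤ} {φ ψ : M → M}

theorem neg_of_comp_eq_smul (hφ : IsSemilinearEnd k φ) (hinj : φ.Injective) {q : ℂ[X]}
    (hψ : ∀ v, φ (ψ v) = q • v) : IsSemilinearEnd (-k) ψ := by
  refine ⟨fun v w => hinj ?_, fun p v => hinj ?_⟩
  · rw [hφ.1, hψ, hψ, hψ, smul_add]
  · rw [hψ, hφ.2, nabla_zpow_apply_nabla_zpow_neg_apply, hψ, smul_comm]

theorem comp_eq_smul_of_comp_eq_nabla_zpow_smul (hφ : IsSemilinearEnd k φ) (hinj : φ.Injective)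
    {q : ℂ[X]} (hψ : ∀ v, φ (ψ v) = (nabla ^ k) q • v) (v : M) : ψ (φ v) = q • v :=
  hinj (by rw [hψ, hφ.2])

end IsSemilinearEnd

theorem IsCasimirRep.injective_right [Module.IsTorsionFree ℂ[X] M] {μ : ℂ} {φm φp : M → M}
    (h : IsCasimirRep μ φm φp) : φp.Injective := fun v w hvw =>
  smul_right_injective M (piMu_ne_zero μ) (by simp only [← h.2.2.1, hvw])

theorem isCasimirRep_of_comp_eq_smul {μ : ℂ} {φm φp : M → M} (hφ : IsSemilinearEnd 1 φp)
    (hinj : φp.Injective) (hφm : ∀ v, φp (φm v) = nabla (piMu μ) • v) :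
    IsCasimirRep μ φm φp := by
  have hφm' : ∀ v, φp (φm v) = (nabla ^ (1 : ℤ)) (piMu μ) • v := by simpa only [zpow_one]
  exact ⟨hφ.neg_of_comp_eq_smul hinj hφm, hφ, hφ.comp_eq_smul_of_comp_eq_nabla_zpow_smul hinj hφm', hφm⟩

end

theorem stmt_2_general (μ : ℂ) (n : ℕ) :
    (∀ φm φp : (Fin n → Polynomial ℂ) → (Fin n → Polynomial ℂ),
      IsCasimirRep μ φm φp →
        IsSemilinearEnd 1 φp ∧ Function.Injective φp ∧
          ∀ w : Fin n → Polynomial ℂ, ∃ v, (nabla (piMu μ)) • w = φp v) ∧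
    (∀ φp : (Fin n → Polynomial ℂ) → (Fin n → Polynomial ℂ),
      IsSemilinearEnd 1 φp → Function.Injective φp →
        (∀ w : Fin n → Polynomial ℂ, ∃ v, (nabla (piMu μ)) • w = φp v) →
        ∃! φm : (Fin n → Polynomial ℂ) → (Fin n → Polynomial ℂ),
          IsCasimirRep μ φm φp) := by
  refine ⟨fun φm φp h => ⟨h.2.1, h.injective_right, fun w => ⟨φm w, (h.2.2.2 w).symm⟩⟩, ?_⟩
  intro φp hφ hinj hsurj
  choose φm hφm using hsurj
  refine ⟨φm, isCasimirRep_of_comp_eq_smul hφ hinj fun v => (hφm v).symm, fun φm' h => ?_⟩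
  funext w
  exact hinj (by rw [h.2.2.2, hφm])

/-- `(φ₋₁, φ₁) ↦ φ₁` is a bijection from Casimir representations of semi-level
`μ` on `V = ℂ[z]^n` onto the injective `φ ∈ End₁(V)` such that `π_μ(z+1)·w ∈ φ(V)` for all
`w` (i.e. the `n`-th invariant factor of `φ` divides `π_μ(z+1)`); in particular for each such
`φ` there is a unique `φ₋₁ ∈ End₋₁(V)` making `(φ₋₁, φ)` a Casimir representation. -/
theorem stmt_2 (μ : ℂ) (n : ℕ) (hn : 1 ≤ n) :
    (∀ φm φp : (Fin n → Polynomial ℂ) → (Fin n → Polynomial ℂ),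
      IsCasimirRep μ φm φp →
        IsSemilinearEnd 1 φp ∧ Function.Injective φp ∧
          ∀ w : Fin n → Polynomial ℂ, ∃ v, (nabla (piMu μ)) • w = φp v) ∧
    (∀ φp : (Fin n → Polynomial ℂ) → (Fin n → Polynomial ℂ),
      IsSemilinearEnd 1 φp → Function.Injective φp →
        (∀ w : Fin n → Polynomial ℂ, ∃ v, (nabla (piMu μ)) • w = φp v) →
        ∃! φm : (Fin n → Polynomial ℂ) → (Fin n → Polynomial ℂ),
          IsCasimirRep μ φm φp) :=
  stmt_2_general μ n
end

section
/- Let μ ∈ ℂ and let A₋₁, A₁ ∈ M_n(ℂ[z]) satisfy A₋₁(z)·A₁(z−1) = π_μ(z)·I_n and A₁(z)·A₋₁(z+1) = π_μ(z+1)·I_n. Suppose A₁(z) = U(z)·S(z)·V(z) with U, V ∈ GL_n(ℂ[z]) and S(z) diagonal. Then T(z) := V(z−1)·A₋₁(z)·U(z−1) is a diagonal matrix over ℂ[z] satisfying S(z)·T(z+1) = π_μ(z+1)·I_n, and A₋₁(z) = V(z−1)⁻¹·T(z)·U(z−1)⁻¹. In particular, writing S = diag(s₁,…,s_n) and T = diag(t₁,…,t_n),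 one has s_i(z)·t_i(z+1) = π_μ(z+1) for each i. -/
open Polynomial

lemma IsUnit.mul_eq_of_mul_eq_of_commute {M : Type*} [Monoid M] {u x z : M} (hu : IsUnit u)
    (hz : Commute u z) (h : u * x = z) : x * u = z :=
  hu.mul_left_cancel (by rw [← mul_assoc, h, hz.eq])

namespace Matrix

variable {ι R : Type*}

lemma IsDiag.of_map {S : Type*} [Zero R] [Zero S] {A : Matrix ι ι R} {f : R → S}
    (hf : Function.Injective f) (hf0 : f 0 = 0) (h : (A.map f).IsDiag) : A.IsDiag :=
  fun _ _ hij => hf (by rw [hf0]; exact h hij)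

variable [Fintype ι] [DecidableEq ι]

lemma IsDiag.mul_apply [NonUnitalNonAssocSemiring R] {D : Matrix ι ι R} (hD : D.IsDiag)
    (M : Matrix ι ι R) (i j : ι) : (D * M) i j = D i i * M i j := by
  conv_lhs => rw [← hD.diagonal_diag]
  rw [diagonal_mul, diag_apply]

lemma IsDiag.of_mul_eq_smul_one [Semiring R] [NoZeroDivisors R] {D M : Matrix ι ι R} {c : R}
    (hD : D.IsDiag) (hc : c ≠ 0) (h : D * M = c • 1) : M.IsDiag := by
  intro i j hij
  have hDM : ∀ j, D i i * M i j = c • (1 : Matrix ι ι R) i j := fun j => by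
    rw [← hD.mul_apply, h, smul_apply]
  have hDi : D i i ≠ 0 := left_ne_zero_of_mul (b := M i i) (by simpa [hDM] using hc)
  simpa [one_apply_ne hij, hDi] using hDM j

end Matrix

namespace AlgEquiv

variable {R A B ι : Type*} [CommSemiring R] [Fintype ι]

lemma map_symm_mul_mul_map_symm [Semiring A] [Semiring B] [Algebra R A] [Algebra R B]
    (e : A ≃ₐ[R] B) (U V : Matrix ι ι B) (M : Matrix ι ι A) :
    (V.map e.symm * M * U.map e.symm).map e = V * M.map e * U := by
  simp [Matrix.map_mul, Matrix.map_map, Function.comp_def]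

lemma isUnit_det_map [DecidableEq ι] [CommRing A] [CommRing B] [Algebra R A] [Algebra R B]
    (e : A ≃ₐ[R] B) {U : Matrix ι ι A} (hU : IsUnit U) : IsUnit (U.map e).det :=
  (Matrix.isUnit_iff_isUnit_det _).mp (hU.map e.mapMatrix)

end AlgEquiv

theorem stmt_3_general (μ : ℂ) (n : ℕ)
    (Am A1 U V S : Matrix (Fin n) (Fin n) (Polynomial ℂ))
    (h2 : A1 * Am.map ⇑nabla = (nabla (piMu μ)) • (1 : Matrix (Fin n) (Fin n) (Polynomial ℂ)))
    (hU : IsUnit U) (hV : IsUnit V) (hS : S.IsDiag)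
    (hA1 : A1 = U * S * V) :
    (V.map ⇑nabla.symm * Am * U.map ⇑nabla.symm).IsDiag ∧
    S * (V.map ⇑nabla.symm * Am * U.map ⇑nabla.symm).map ⇑nabla =
      (nabla (piMu μ)) • (1 : Matrix (Fin n) (Fin n) (Polynomial ℂ)) ∧
    Am = (V.map ⇑nabla.symm)⁻¹ * (V.map ⇑nabla.symm * Am * U.map ⇑nabla.symm) *
      (U.map ⇑nabla.symm)⁻¹ ∧
    ∀ i : Fin n,
      S i i * nabla ((V.map ⇑nabla.symm * Am * U.map ⇑nabla.symm) i i) = nabla (piMu μ) := by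
  have hST : S * (V.map nabla.symm * Am * U.map nabla.symm).map nabla = nabla (piMu μ) • 1 := by
    rw [nabla.map_symm_mul_mul_map_symm]
    simp only [← mul_assoc]
    refine hU.mul_eq_of_mul_eq_of_commute ((Commute.one_right U).smul_right _) ?_
    rw [← h2, hA1]
    simp only [mul_assoc]
  have hc : nabla (piMu μ) ≠ 0 := (map_ne_zero_iff _ nabla.injective).mpr (piMu_ne_zero μ)
  refine ⟨(hS.of_mul_eq_smul_one hc hST).of_map nabla.injective (map_zero _), hST, ?_, fun i => ?_⟩
  · rw [Matrix.mul_assoc, Matrix.mul_nonsing_inv_cancel_right (h := nabla.symm.isUnit_det_map hU),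
      Matrix.nonsing_inv_mul_cancel_left (h := nabla.symm.isUnit_det_map hV)]
  · simpa only [hS.mul_apply, Matrix.map_apply, Matrix.smul_apply, Matrix.one_apply_eq,
      smul_eq_mul, mul_one] using congr_fun (congr_fun hST i) i

/-- if `A₋₁(z)·A₁(z−1) = π_μ(z)·I`, `A₁(z)·A₋₁(z+1) = π_μ(z+1)·I` and
`A₁ = U·S·V` with `U, V ∈ GL_n(ℂ[z])` and `S` diagonal, then
`T(z) := V(z−1)·A₋₁(z)·U(z−1)` is diagonal, satisfies `S(z)·T(z+1) = π_μ(z+1)·I` and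
`A₋₁(z) = V(z−1)⁻¹·T(z)·U(z−1)⁻¹`; entrywise, `s_i(z)·t_i(z+1) = π_μ(z+1)`. -/
theorem stmt_3 (μ : ℂ) (n : ℕ)
    (Am A1 U V S : Matrix (Fin n) (Fin n) (Polynomial ℂ))
    (h1 : Am * A1.map ⇑nabla.symm = piMu μ • (1 : Matrix (Fin n) (Fin n) (Polynomial ℂ)))
    (h2 : A1 * Am.map ⇑nabla = (nabla (piMu μ)) • (1 : Matrix (Fin n) (Fin n) (Polynomial ℂ)))
    (hU : IsUnit U) (hV : IsUnit V) (hS : S.IsDiag)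
    (hA1 : A1 = U * S * V) :
    (V.map ⇑nabla.symm * Am * U.map ⇑nabla.symm).IsDiag ∧
    S * (V.map ⇑nabla.symm * Am * U.map ⇑nabla.symm).map ⇑nabla =
      (nabla (piMu μ)) • (1 : Matrix (Fin n) (Fin n) (Polynomial ℂ)) ∧
    Am = (V.map ⇑nabla.symm)⁻¹ * (V.map ⇑nabla.symm * Am * U.map ⇑nabla.symm) *
      (U.map ⇑nabla.symm)⁻¹ ∧
    ∀ i : Fin n,
      S i i * nabla ((V.map ⇑nabla.symm * Am * U.map ⇑nabla.symm) i i) = nabla (piMu μ) :=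
  stmt_3_general μ n Am A1 U V S h2 hU hV hS hA1
end

section
/- Let μ ∈ ℂ and let A₋₁, A₁ ∈ M_n(ℂ[z]) satisfy A₋₁(z)·A₁(z−1) = π_μ(z)·I_n and A₁(z)·A₋₁(z+1) = π_μ(z+1)·I_n (so they define a Casimir representation of semi-level μ on ℂ[z]^n). Suppose A₁(z) = U(z)·S(z)·V(z) with U, V ∈ GL_n(ℂ[z]) and S = diag(s₁,…,s_n) with each s_i monic and s_i dividing s_{i+1} (the Smith normal form of A₁). Then every s_i divides π_μ(z+1) = (z+μ+1)(z−μ); consequently each s_i ∈ {1, z+μ+1, z−μ, (z+μ+1)(z−μ)} and S has one of the forms S₊(i,j,k) = diag(1 (i times), z+μ+1 (j times), π_μ(z+1) (k times)) with i+j+k = n and j > 0, S₀(l,m) = diag(1 (l times), π_μ(z+1) (m times)) with l+m = n, or S₋(i,j,k) = diag(1 (i times), z−μ (j times), π_μ(z+1) (k times)) with i+j+k = n and j > 0. -/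
open Polynomial

/-!
Shifting the second Casimir identity `A₁(z) A₋₁(z+1) = π_μ(z+1) I` and conjugating by `U`
gives `S · (V A₋₁(z+1) U) = π_μ(z+1) I`, so each diagonal entry `s_i` divides
`π_μ(z+1) = (z+μ+1)(z−μ)`. A monic divisor of a product of two monic irreducibles is `1`,
one of the factors, or the product. Along the divisibility chain, "`s_l = 1`" and
"`s_l ≠ π_μ(z+1)`" cut out initial segments, and between them all entries are the same
linear factor, because one irreducible dividing another is equal to it.
-/

lemma nabla_piMu (μ : ℂ) : nabla (piMu μ) = (X + C μ + 1) * (X - C μ) := by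
  simp only [nabla, piMu, algEquivAevalXAddC_apply, map_mul, map_add, map_sub, map_one,
    aeval_X, aeval_C, algebraMap_eq]
  ring

lemma Matrix.dvd_of_eq_mul_diagonal_mul_of_mul_eq_smul_one {R ι : Type*} [CommRing R]
    [Fintype ι] [DecidableEq ι] {A B U V : Matrix ι ι R} {s : ι → R} {c : R}
    (hU : IsUnit U) (hA : A = U * diagonal s * V) (hAB : A * B = c • 1) (i : ι) :
    s i ∣ c := by
  obtain ⟨u, rfl⟩ := hU
  have hconj : diagonal s * (V * B * (u : Matrix ι ι R)) = c • 1 :=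
    calc diagonal s * (V * B * (u : Matrix ι ι R))
        = ↑u⁻¹ * (A * B) * (u : Matrix ι ι R) := by
          simp [hA, Matrix.mul_assoc]
      _ = c • 1 := by simp [hAB]
  have hii := congrFun (congrFun hconj i) i
  simp only [diagonal_mul, smul_apply, one_apply_eq, smul_eq_mul, mul_one] at hii
  exact ⟨_, hii.symm⟩

lemma Polynomial.Monic.eq_one_or_eq_of_dvd_mul_of_irreducible {K : Type*} [Field K]
    {d p q : K[X]} (hd : d.Monic) (hp : p.Monic) (hq : q.Monic)
    (hpi : Irreducible p) (hqi : Irreducible q) (h : d ∣ p * q) :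
    d = 1 ∨ d = p ∨ d = q ∨ d = p * q := by
  obtain ⟨d₁, d₂, h₁, h₂, rfl⟩ := exists_dvd_and_dvd_of_dvd_mul h
  rcases hpi.dvd_iff.mp h₁ with u₁ | a₁ <;> rcases hqi.dvd_iff.mp h₂ with u₂ | a₂
  · exact .inl (hd.eq_one_of_isUnit (u₁.mul u₂))
  · exact .inr <| .inr <| .inl <|
      eq_of_monic_of_associated hd hq ((associated_unit_mul_left d₂ d₁ u₁).trans a₂.symm)
  · exact .inr <| .inl <|
      eq_of_monic_of_associated hd hp ((associated_mul_unit_left d₁ d₂ u₂).trans a₁.symm)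
  · exact .inr <| .inr <| .inr <| eq_of_monic_of_associated hd (hp.mul hq) (a₁.mul_mul a₂).symm

lemma Fin.iff_lt_card_filter_of_le_imp {n : ℕ} (P : Fin n → Prop) [DecidablePred P]
    (hP : ∀ i j : Fin n, i ≤ j → P j → P i) (l : Fin n) :
    P l ↔ (l : ℕ) < (Finset.univ.filter P).card := by
  constructor
  · intro hl
    have hsub : Finset.Iic l ⊆ Finset.univ.filter P := fun j hj =>
      Finset.mem_filter.mpr ⟨Finset.mem_univ _, hP j l (Finset.mem_Iic.mp hj) hl⟩
    have := Finset.card_le_card hsub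
    rw [Fin.card_Iic] at this
    omega
  · intro hl
    by_contra hnl
    have hsub : Finset.univ.filter P ⊆ Finset.Iio l := fun j hj =>
      Finset.mem_Iio.mpr <| lt_of_not_ge fun hlj => hnl (hP l j hlj (Finset.mem_filter.mp hj).2)
    have := Finset.card_le_card hsub
    rw [Fin.card_Iio] at this
    omega

lemma exists_blocks_of_dvd_mul_of_irreducible {K : Type*} [Field K] {n : ℕ}
    {s : Fin n → K[X]} {p q : K[X]} (hp : p.Monic) (hq : q.Monic)
    (hpi : Irreducible p) (hqi : Irreducible q) (hmonic : ∀ i, (s i).Monic)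
    (hchain : ∀ i j : Fin n, i ≤ j → s i ∣ s j) (hdvd : ∀ i, s i ∣ p * q) :
    ∃ (a b : ℕ) (d : K[X]), a ≤ b ∧ b ≤ n ∧ (d = p ∨ d = q) ∧
      (∀ l : Fin n, (l : ℕ) < a → s l = 1) ∧
      (∀ l : Fin n, a ≤ (l : ℕ) → (l : ℕ) < b → s l = d) ∧
      (∀ l : Fin n, b ≤ (l : ℕ) → s l = p * q) := by
  classical
  have hpq1 : p * q ≠ 1 := fun h => hpi.not_isUnit (IsUnit.of_mul_eq_one q h)
  have hone : ∀ l, s l = 1 ↔ (l : ℕ) < (Finset.univ.filter fun i => s i = 1).card :=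
    Fin.iff_lt_card_filter_of_le_imp _ fun i j hij hj =>
      (hmonic i).eq_one_of_isUnit (isUnit_of_dvd_one (hj ▸ hchain i j hij))
  have htop : ∀ l, s l ≠ p * q ↔ (l : ℕ) < (Finset.univ.filter fun i => s i ≠ p * q).card :=
    Fin.iff_lt_card_filter_of_le_imp _ fun i j hij hj hi => hj <|
      eq_of_monic_of_associated (hmonic j) (hp.mul hq)
        (associated_of_dvd_dvd (hdvd j) (hi ▸ hchain i j hij))
  set a := (Finset.univ.filter fun i => s i = 1).card
  set b := (Finset.univ.filter fun i => s i ≠ p * q).card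
  have hab : a ≤ b := Finset.card_le_card fun i hi => by
    simp only [Finset.mem_filter] at hi ⊢
    exact ⟨hi.1, fun h => hpq1 (h.symm.trans hi.2)⟩
  have hbn : b ≤ n := (Finset.card_filter_le _ _).trans (by simp)
  have hmid : ∀ l : Fin n, a ≤ (l : ℕ) → (l : ℕ) < b → s l = p ∨ s l = q := by
    intro l hla hlb
    rcases (hmonic l).eq_one_or_eq_of_dvd_mul_of_irreducible hp hq hpi hqi (hdvd l)
      with h | h | h | h
    · exact absurd ((hone l).mp h) (by omega)
    · exact .inl h
    · exact .inr h
    · exact absurd h ((htop l).mpr hlb)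
  have hmid_irred : ∀ l : Fin n, a ≤ (l : ℕ) → (l : ℕ) < b → Irreducible (s l) := by
    intro l hla hlb
    rcases hmid l hla hlb with h | h <;> rw [h] <;> assumption
  have hlow : ∀ l : Fin n, (l : ℕ) < a → s l = 1 := fun l => (hone l).mpr
  have hhigh : ∀ l : Fin n, b ≤ (l : ℕ) → s l = p * q := fun l hl =>
    not_not.mp fun h => absurd ((htop l).mp h) (by omega)
  by_cases hex : ∃ l₀ : Fin n, a ≤ (l₀ : ℕ) ∧ (l₀ : ℕ) < b
  · obtain ⟨l₀, hl₀a, hl₀b⟩ := hex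
    refine ⟨a, b, s l₀, hab, hbn, hmid l₀ hl₀a hl₀b, hlow, fun l hla hlb => ?_, hhigh⟩
    have hirr := hmid_irred l hla hlb
    have hirr₀ := hmid_irred l₀ hl₀a hl₀b
    rcases le_total l l₀ with h | h
    · exact eq_of_monic_of_associated (hmonic l) (hmonic l₀)
        (hirr.associated_of_dvd hirr₀ (hchain l l₀ h))
    · exact (eq_of_monic_of_associated (hmonic l₀) (hmonic l)
        (hirr₀.associated_of_dvd hirr (hchain l₀ l h))).symm
  · exact ⟨a, b, p, hab, hbn, .inl rfl, hlow,
      fun l hla hlb => absurd ⟨l, hla, hlb⟩ hex, hhigh⟩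

theorem stmt_4_general (μ : ℂ) (n : ℕ)
    (Am A1 U V : Matrix (Fin n) (Fin n) (Polynomial ℂ))
    (s : Fin n → Polynomial ℂ)
    (h2 : A1 * Am.map ⇑nabla = (nabla (piMu μ)) • (1 : Matrix (Fin n) (Fin n) (Polynomial ℂ)))
    (hU : IsUnit U)
    (hA1 : A1 = U * Matrix.diagonal s * V)
    (hmonic : ∀ i, (s i).Monic)
    (hchain : ∀ i j : Fin n, i ≤ j → s i ∣ s j) :
    nabla (piMu μ) = (X + C μ + 1) * (X - C μ) ∧
    (∀ i, s i ∣ nabla (piMu μ)) ∧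
    (∀ i, s i = 1 ∨ s i = X + C μ + 1 ∨ s i = X - C μ ∨ s i = nabla (piMu μ)) ∧
    (∃ (a b : ℕ) (d : Polynomial ℂ), a ≤ b ∧ b ≤ n ∧
      (d = X + C μ + 1 ∨ d = X - C μ) ∧
      (∀ l : Fin n, (l : ℕ) < a → s l = 1) ∧
      (∀ l : Fin n, a ≤ (l : ℕ) → (l : ℕ) < b → s l = d) ∧
      (∀ l : Fin n, b ≤ (l : ℕ) → s l = nabla (piMu μ))) := by
  have hdvd := Matrix.dvd_of_eq_mul_diagonal_mul_of_mul_eq_smul_one hU hA1 h2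
  rw [nabla_piMu] at hdvd ⊢
  have hp : (X + C μ + 1 : ℂ[X]).Monic := by
    simpa [add_assoc] using monic_X_add_C (μ + 1)
  have hpi : Irreducible (X + C μ + 1 : ℂ[X]) :=
    hp.irreducible_of_degree_eq_one (by simpa [add_assoc] using degree_X_add_C (μ + 1))
  have hqi : Irreducible (X - C μ : ℂ[X]) := irreducible_X_sub_C μ
  exact ⟨rfl, hdvd, fun i => (hmonic i).eq_one_or_eq_of_dvd_mul_of_irreducible hp
      (monic_X_sub_C μ) hpi hqi (hdvd i),
    exists_blocks_of_dvd_mul_of_irreducible hp (monic_X_sub_C μ) hpi hqi hmonic hchain hdvd⟩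

/-- if `(A₋₁, A₁)` defines a Casimir representation of semi-level `μ` (matrix
identities) and `A₁ = U·diag(s₁,…,s_n)·V` is a Smith normal form (`U, V` invertible, `s_i`
monic, `s_i ∣ s_{i+1}`), then every `s_i` divides `π_μ(z+1) = (z+μ+1)(z−μ)`; consequently
every `s_i ∈ {1, z+μ+1, z−μ, π_μ(z+1)}` and the diagonal has one of the forms `S₊(i,j,k)`,
`S₀(l,m)`, `S₋(i,j,k)` (blocks of `1`'s, then a linear factor, then `π_μ(z+1)`'s; the middle
block possibly empty giving `S₀`). -/
theorem stmt_4 (μ : ℂ) (n : ℕ)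
    (Am A1 U V : Matrix (Fin n) (Fin n) (Polynomial ℂ))
    (s : Fin n → Polynomial ℂ)
    (h1 : Am * A1.map ⇑nabla.symm = piMu μ • (1 : Matrix (Fin n) (Fin n) (Polynomial ℂ)))
    (h2 : A1 * Am.map ⇑nabla = (nabla (piMu μ)) • (1 : Matrix (Fin n) (Fin n) (Polynomial ℂ)))
    (hU : IsUnit U) (hV : IsUnit V)
    (hA1 : A1 = U * Matrix.diagonal s * V)
    (hmonic : ∀ i, (s i).Monic)
    (hchain : ∀ i j : Fin n, i ≤ j → s i ∣ s j) :
    nabla (piMu μ) = (X + C μ + 1) * (X - C μ) ∧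
    (∀ i, s i ∣ nabla (piMu μ)) ∧
    (∀ i, s i = 1 ∨ s i = X + C μ + 1 ∨ s i = X - C μ ∨ s i = nabla (piMu μ)) ∧
    (∃ (a b : ℕ) (d : Polynomial ℂ), a ≤ b ∧ b ≤ n ∧
      (d = X + C μ + 1 ∨ d = X - C μ) ∧
      (∀ l : Fin n, (l : ℕ) < a → s l = 1) ∧
      (∀ l : Fin n, a ≤ (l : ℕ) → (l : ℕ) < b → s l = d) ∧
      (∀ l : Fin n, b ≤ (l : ℕ) → s l = nabla (piMu μ))) :=
  stmt_4_general μ n Am A1 U V s h2 hU hA1 hmonic hchain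
end

section
/- Let μ ∈ ℂ, let V be a free ℂ[z]-module of finite rank, V* = Hom_{ℂ[z]}(V, ℂ[z]) its dual, and let (φ₋₁, φ₁) be a Casimir representation of semi-level μ on V. Define φ₋₁^∨(ω) := ∇⁻¹∘ω∘φ₁ and φ₁^∨(ω) := ∇∘ω∘φ₋₁ for ω ∈ V*. Then φ₋₁^∨ ∈ End₋₁(V*), φ₁^∨ ∈ End₁(V*), and (φ₋₁^∨, φ₁^∨) is a Casimir representation of semi-level μ on V*. -/
open Polynomial

/-!
For a `σ`-semilinear map `φ : M → N`, the map `ω ↦ σ⁻¹ ∘ ω ∘ φ` sends linear forms to linear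
forms, and is itself `σ⁻¹`-semilinear. Composing the duals of a `σ`-semilinear and a
`σ⁻¹`-semilinear map, the twists `σ` and `σ⁻¹` cancel, so a relation `χ ∘ φ = c •` dualises to
`φ^∨ ∘ χ^∨ = c •`; with `σ = ∇` this carries both Casimir relations over to `V*`.
-/

namespace LinearMap

variable {R S M N : Type*} [CommSemiring R] [CommSemiring S]
  [AddCommMonoid M] [Module R M] [AddCommMonoid N] [Module S N]
  {σ : R →+* S} {σ' : S →+* R} [RingHomInvPair σ σ']

def semilinearDual (φ : M →ₛₗ[σ] N) : Module.Dual S N →ₛₗ[σ'] Module.Dual R M where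
  toFun ω :=
    { toFun v := σ' (ω (φ v))
      map_add' v w := by simp only [map_add]
      map_smul' r v := by
        simp only [map_smulₛₗ, smul_eq_mul, map_mul, RingHomInvPair.comp_apply_eq,
          RingHom.id_apply] }
  map_add' ω η := by ext v; simp only [add_apply, coe_mk, AddHom.coe_mk, map_add]
  map_smul' s ω := by ext v; simp only [smul_apply, coe_mk, AddHom.coe_mk, smul_eq_mul, map_mul]

@[simp]
theorem semilinearDual_apply (φ : M →ₛₗ[σ] N) (ω : Module.Dual S N) (v : M) :
    φ.semilinearDual ω v = σ' (ω (φ v)) :=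
  rfl

theorem semilinearDual_semilinearDual [RingHomInvPair σ' σ] (φ : M →ₛₗ[σ] N) (χ : N →ₛₗ[σ'] M)
    {c : R} (h : ∀ v, χ (φ v) = c • v) (ω : Module.Dual R M) :
    φ.semilinearDual (χ.semilinearDual ω) = c • ω := by
  ext v
  rw [semilinearDual_apply, semilinearDual_apply, RingHomInvPair.comp_apply_eq₂, h, map_smul,
    smul_apply]

end LinearMap

instance AlgEquiv.ringHomInvPair_zpow {R A : Type*} [CommSemiring R] [Semiring A] [Algebra R A]
    (e : A ≃ₐ[R] A) (k : ℤ) :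
    RingHomInvPair ((e ^ k : A ≃ₐ[R] A) : A →+* A) ((e ^ (-k) : A ≃ₐ[R] A) : A →+* A) where
  comp_eq := by ext x; simp
  comp_eq₂ := by ext x; simp

section

variable {M : Type*} [AddCommMonoid M] [Module ℂ[X] M]

def IsSemilinearEnd.toSemilinearMap {k : ℤ} {φ : M → M} (h : IsSemilinearEnd k φ) :
    M →ₛₗ[((nabla ^ k : ℂ[X] ≃ₐ[ℂ] ℂ[X]) : ℂ[X] →+* ℂ[X])] M where
  toFun := φ
  map_add' := h.1
  map_smul' := h.2

theorem LinearMap.isSemilinearEnd {k : ℤ}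
    (f : M →ₛₗ[((nabla ^ k : ℂ[X] ≃ₐ[ℂ] ℂ[X]) : ℂ[X] →+* ℂ[X])] M) :
    IsSemilinearEnd k f :=
  ⟨f.map_add, f.map_smulₛₗ⟩

end

theorem stmt_6_general {V : Type*} [AddCommGroup V] [Module (Polynomial ℂ) V]
    (μ : ℂ) (φm φp : V → V) (h : IsCasimirRep μ φm φp) :
    ∃ ψm ψp : (V →ₗ[Polynomial ℂ] Polynomial ℂ) → (V →ₗ[Polynomial ℂ] Polynomial ℂ),
      (∀ (ω : V →ₗ[Polynomial ℂ] Polynomial ℂ) (v : V), ψm ω v = nabla.symm (ω (φp v))) ∧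
      (∀ (ω : V →ₗ[Polynomial ℂ] Polynomial ℂ) (v : V), ψp ω v = nabla (ω (φm v))) ∧
      IsSemilinearEnd (-1) ψm ∧ IsSemilinearEnd 1 ψp ∧
      IsCasimirRep μ ψm ψp := by
  obtain ⟨hm, hp, hmp, hpm⟩ := h
  let Φm := hm.toSemilinearMap
  let Φp := hp.toSemilinearMap
  -- `nabla ^ (-1)` and `nabla ^ (-(-1))` are definitionally `nabla.symm` and `nabla`.
  have hψm : IsSemilinearEnd (-1) Φp.semilinearDual := Φp.semilinearDual.isSemilinearEnd
  have hψp : IsSemilinearEnd 1 Φm.semilinearDual := Φm.semilinearDual.isSemilinearEnd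
  exact ⟨Φp.semilinearDual, Φm.semilinearDual, fun _ _ => rfl, fun _ _ => rfl, hψm, hψp, hψm, hψp,
    Φp.semilinearDual_semilinearDual Φm hmp, Φm.semilinearDual_semilinearDual Φp hpm⟩

/-- if `(φ₋₁, φ₁)` is a Casimir representation of semi-level `μ` on a free
`ℂ[z]`-module `V` of finite rank, then the dual maps `φ₋₁^∨(ω) = ∇⁻¹∘ω∘φ₁` and
`φ₁^∨(ω) = ∇∘ω∘φ₋₁` are well-defined semilinear endomorphisms of degrees `-1` and `1` of
`V* = Hom_{ℂ[z]}(V, ℂ[z])`, and `(φ₋₁^∨, φ₁^∨)` is a Casimir representation of semi-level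
`μ` on `V*`. -/
theorem stmt_6 {V : Type*} [AddCommGroup V] [Module (Polynomial ℂ) V]
    [Module.Free (Polynomial ℂ) V] [Module.Finite (Polynomial ℂ) V]
    (μ : ℂ) (φm φp : V → V) (h : IsCasimirRep μ φm φp) :
    ∃ ψm ψp : (V →ₗ[Polynomial ℂ] Polynomial ℂ) → (V →ₗ[Polynomial ℂ] Polynomial ℂ),
      (∀ (ω : V →ₗ[Polynomial ℂ] Polynomial ℂ) (v : V), ψm ω v = nabla.symm (ω (φp v))) ∧
      (∀ (ω : V →ₗ[Polynomial ℂ] Polynomial ℂ) (v : V), ψp ω v = nabla (ω (φm v))) ∧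
      IsSemilinearEnd (-1) ψm ∧ IsSemilinearEnd 1 ψp ∧
      IsCasimirRep μ ψm ψp :=
  stmt_6_general μ φm φp h
end

section
/- Let φ₋₁ ∈ End₋₁(ℂ[z]) and φ₁ ∈ End₁(ℂ[z]) satisfy φ₋₁∘φ₁ − φ₁∘φ₋₁ = multiplication by −2z (i.e. they define an sl(2)-module structure on the rank-one free ℂ[z]-module ℂ[z], with L₀ acting by multiplication by z). Then there exists ν ∈ ℂ such that φ₋₁∘φ₁ = multiplication by (z − 1/2)² + ν and φ₁∘φ₋₁ = multiplication by (z + 1/2)² + ν; in particular the Casimir operator 4·((z−1/2)²·id − φ₋₁∘φ₁) acts by the constant −4ν, so every polynomial sl(2)-representation of rank one is a Casimir representation. -/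
/-
Evaluating semilinearity at `1` gives `φ₁ p = ∇p · a` and `φ₋₁ p = ∇⁻¹p · b` with `a = φ₁ 1`,
`b = φ₋₁ 1`, so `φ₋₁∘φ₁` and `φ₁∘φ₋₁` are multiplication by `F = ∇⁻¹a · b` and by `∇F`.
The commutation relation becomes the difference equation `F − ∇F = −2z`, one solution of which
is `(z − 1/2)²`. The difference of two solutions is `∇`-invariant, so as a function on `ℂ` it
is `1`-periodic; it then takes the same value at every natural number and is constant.
-/

open Polynomial

lemma nabla_apply (p : ℂ[X]) : nabla p = p.comp (X + C 1) := by
  rw [nabla, algEquivAevalXAddC_apply, comp_eq_aeval]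

lemma IsSemilinearEnd.apply_eq_mul {k : ℤ} {φ : ℂ[X] → ℂ[X]} (hφ : IsSemilinearEnd k φ)
    (p : ℂ[X]) : φ p = (nabla ^ k) p * φ 1 := by
  simpa only [smul_eq_mul, mul_one] using hφ.2 p 1

lemma eq_C_of_nabla_eq {G : ℂ[X]} (h : nabla G = G) : G = C (G.eval 0) := by
  have h_periodic : ∀ x : ℂ, G.eval (x + 1) = G.eval x := fun x => by
    conv_rhs => rw [← h, nabla_apply, eval_comp]
    simp
  have h_nat : ∀ n : ℕ, G.eval (n : ℂ) = G.eval 0 := fun n => by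
    induction n with
    | zero => simp
    | succ n ih => rw [Nat.cast_succ, h_periodic, ih]
  refine eq_of_infinite_eval_eq _ _ ((Set.infinite_range_of_injective Nat.cast_injective).mono ?_)
  rintro _ ⟨n, rfl⟩
  simp [h_nat n]

lemma nabla_X_sub_half_sq_add_C (ν : ℂ) :
    nabla ((X - C (1/2 : ℂ)) ^ 2 + C ν) = (X + C (1/2 : ℂ)) ^ 2 + C ν := by
  rw [nabla_apply]
  simp only [add_comp, pow_comp, sub_comp, X_comp, C_comp, add_sub_assoc, ← C_sub]
  norm_num

lemma exists_eq_of_sub_nabla_eq {F : ℂ[X]} (hF : F - nabla F = -2 * X) :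
    ∃ ν : ℂ, F = (X - C (1/2 : ℂ)) ^ 2 + C ν := by
  set G := F - (X - C (1/2 : ℂ)) ^ 2
  have hG : nabla G = G := by
    have h := nabla_X_sub_half_sq_add_C 0
    rw [C_0, add_zero, add_zero] at h
    have h2 : (C (1/2 : ℂ)) * 2 = 1 := by
      rw [← C_ofNat, ← C_mul, ← C_1]; norm_num
    simp only [G, map_sub, h]
    linear_combination -hF - 2 * X * h2
  exact ⟨G.eval 0, by rw [← eq_C_of_nabla_eq hG]; ring⟩

/-- any `sl(2)`-module structure `(φ₋₁, φ₁)` on the rank-one free module `ℂ[z]`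
(with `L₀` acting by multiplication by `z`) satisfies `φ₋₁∘φ₁ = ((z−1/2)² + ν)·` and
`φ₁∘φ₋₁ = ((z+1/2)² + ν)·` for some `ν ∈ ℂ`; in particular the Casimir operator
`4((z−1/2)²·id − φ₋₁∘φ₁)` acts by the constant `−4ν`, so every rank-one polynomial
`sl(2)`-representation is a Casimir representation. -/
theorem stmt_8 (φm φp : Polynomial ℂ → Polynomial ℂ)
    (hm : IsSemilinearEnd (-1) φm) (hp : IsSemilinearEnd 1 φp)
    (hcomm : ∀ p : Polynomial ℂ, φm (φp p) - φp (φm p) = ((-2 : Polynomial ℂ) * X) • p) :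
    ∃ ν : ℂ,
      (∀ p : Polynomial ℂ, φm (φp p) = ((X - C (1/2 : ℂ)) ^ 2 + C ν) • p) ∧
      (∀ p : Polynomial ℂ, φp (φm p) = ((X + C (1/2 : ℂ)) ^ 2 + C ν) • p) ∧
      (∀ p : Polynomial ℂ,
        (4 : Polynomial ℂ) • ((X - C (1/2 : ℂ)) ^ 2 • p - φm (φp p)) = C (-4 * ν) • p) := by
  set F := nabla.symm (φp 1) * φm 1
  have hmp : ∀ p, φm (φp p) = F * p := fun p => by
    rw [hp.apply_eq_mul, hm.apply_eq_mul, zpow_one, zpow_neg_one]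
    simp only [AlgEquiv.aut_inv, map_mul, AlgEquiv.symm_apply_apply, F]
    ring
  have hpm : ∀ p, φp (φm p) = nabla F * p := fun p => by
    rw [hm.apply_eq_mul, hp.apply_eq_mul, zpow_one, zpow_neg_one]
    simp only [AlgEquiv.aut_inv, map_mul, AlgEquiv.apply_symm_apply, F]
    ring
  obtain ⟨ν, hν⟩ := exists_eq_of_sub_nabla_eq (F := F) (by simpa [hmp, hpm] using hcomm 1)
  refine ⟨ν, fun p => by rw [hmp, hν, smul_eq_mul], fun p => ?_, fun p => ?_⟩
  · rw [hpm, hν, nabla_X_sub_half_sq_add_C, smul_eq_mul]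
  · rw [hmp, hν]
    simp only [smul_eq_mul, C_mul, C_neg, C_ofNat]
    ring
end

section
/- Let μ ∈ ℂ and let a₋₁, a₁ ∈ ℂ[z]. The pair (φ₋₁, φ₁) := (a₋₁(z)·∇⁻¹, a₁(z)·∇) (multiplication by a₋₁ composed with ∇⁻¹, and multiplication by a₁ composed with ∇) is a Casimir representation of semi-level μ on ℂ[z] if and only if there exists γ ∈ ℂ∖{0} such that (a₋₁(z), a₁(z)) is one of the following: (I) (γ⁻¹, γ·(z+μ+1)(z−μ)); (II) (γ⁻¹·(z−μ−1), γ·(z+μ+1)); (III) (γ⁻¹·(z+μ), γ·(z−μ)); (IV) (γ⁻¹·(z+μ)(z−μ−1), γ). -/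
/-!
Both composites of `(a₋₁ ∇⁻¹, a₁ ∇)` are multiplication operators: `φ₋₁ ∘ φ₁` is multiplication by
`a₋₁ · ∇⁻¹(a₁)` and `φ₁ ∘ φ₋₁` is its shift under `∇`. So the representation is Casimir exactly when
`a₋₁ · ∇⁻¹(a₁) = π_μ = (z + μ)(z − μ − 1)`. Since `ℂ[z]` is a UFD whose units are the nonzero constants,
the factorizations of a product of two irreducibles are obtained by distributing the two factors and
a unit `γ`; applying `∇` to the second factor gives the four cases.
-/

open Polynomial

lemma nabla_C (c : ℂ) : nabla (C c) = C c :=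
  nabla.commutes c

lemma nabla_X : nabla X = X + 1 := by
  simp [nabla, algEquivAevalXAddC]

lemma nabla_X_add_C (c : ℂ) : nabla (X + C c) = X + C c + 1 := by
  rw [map_add, nabla_X, nabla_C]; ring

lemma nabla_X_sub_C_sub_one (c : ℂ) : nabla (X - C c - 1) = X - C c := by
  rw [map_sub, map_sub, nabla_X, nabla_C, map_one]; ring

lemma isSemilinearEnd_mul_nabla_zpow (a : ℂ[X]) (k : ℤ) :
    IsSemilinearEnd k (fun p : ℂ[X] => a * (nabla ^ k) p) :=
  ⟨fun v w => by simp only [map_add, mul_add],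
   fun p v => by simp only [map_mul, smul_eq_mul]; ring⟩

theorem isCasimirRep_mul_nabla_iff (μ : ℂ) (am a1 : ℂ[X]) :
    IsCasimirRep μ (fun p : ℂ[X] => am * nabla.symm p) (fun p : ℂ[X] => a1 * nabla p) ↔
      am * nabla.symm a1 = piMu μ := by
  refine ⟨fun h => by simpa using h.2.2.1 1, fun h => ⟨?_, ?_, fun v => ?_, fun v => ?_⟩⟩
  · simpa using isSemilinearEnd_mul_nabla_zpow am (-1)
  · simpa using isSemilinearEnd_mul_nabla_zpow a1 1
  · simp only [smul_eq_mul, map_mul, AlgEquiv.symm_apply_apply, ← h]; ring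
  · simp only [smul_eq_mul, map_mul, AlgEquiv.apply_symm_apply, ← h]; ring

section Factorization

variable {K : Type*} [Field K] {a b p q : K[X]}

lemma exists_C_of_mul_eq_irreducible (hq : Irreducible q) (h : a * b = q) :
    ∃ c : K, c ≠ 0 ∧ ((a = C c⁻¹ ∧ b = C c * q) ∨ (a = C c⁻¹ * q ∧ b = C c)) := by
  have cancel : ∀ {u : K} {x y : K[X]}, u ≠ 0 → C u * x = y → x = C u⁻¹ * y := by
    intro u x y hu hxy
    rw [← hxy, ← mul_assoc, ← C_mul, inv_mul_cancel₀ hu, C_1, one_mul]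
  rcases hq.isUnit_or_isUnit h.symm with ha | hb
  · obtain ⟨u, hu, rfl⟩ := Polynomial.isUnit_iff.mp ha
    exact ⟨u⁻¹, inv_ne_zero hu.ne_zero, Or.inl ⟨by rw [inv_inv], cancel hu.ne_zero h⟩⟩
  · obtain ⟨u, hu, rfl⟩ := Polynomial.isUnit_iff.mp hb
    exact ⟨u, hu.ne_zero, Or.inr ⟨cancel hu.ne_zero (by rw [mul_comm, h]), rfl⟩⟩

theorem mul_eq_mul_of_irreducible_iff (hp : Irreducible p) (hq : Irreducible q) :
    a * b = p * q ↔ ∃ c : K, c ≠ 0 ∧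
      ((a = C c⁻¹ ∧ b = C c * (p * q)) ∨ (a = C c⁻¹ * q ∧ b = C c * p) ∨
       (a = C c⁻¹ * p ∧ b = C c * q) ∨ (a = C c⁻¹ * (p * q) ∧ b = C c)) := by
  constructor
  · intro h
    by_cases hpa : p ∣ a
    · obtain ⟨a', rfl⟩ := hpa
      have h' : a' * b = q := mul_left_cancel₀ hp.ne_zero (by rw [← h, mul_assoc])
      obtain ⟨c, hc, ⟨rfl, rfl⟩ | ⟨rfl, rfl⟩⟩ := exists_C_of_mul_eq_irreducible hq h'
      · exact ⟨c, hc, Or.inr (Or.inr (Or.inl ⟨mul_comm _ _, rfl⟩))⟩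
      · exact ⟨c, hc, Or.inr (Or.inr (Or.inr ⟨by ring, rfl⟩))⟩
    · obtain ⟨b', rfl⟩ := (hp.prime.dvd_or_dvd ⟨q, h⟩).resolve_left hpa
      have h' : a * b' = q := mul_left_cancel₀ hp.ne_zero (by rw [← h]; ring)
      obtain ⟨c, hc, ⟨rfl, rfl⟩ | ⟨rfl, rfl⟩⟩ := exists_C_of_mul_eq_irreducible hq h'
      · exact ⟨c, hc, Or.inl ⟨rfl, by ring⟩⟩
      · exact ⟨c, hc, Or.inr (Or.inl ⟨rfl, mul_comm _ _⟩)⟩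
  · rintro ⟨c, hc, ⟨rfl, rfl⟩ | ⟨rfl, rfl⟩ | ⟨rfl, rfl⟩ | ⟨rfl, rfl⟩⟩ <;>
    · have hcc : C c⁻¹ * C c = 1 := by rw [← C_mul, inv_mul_cancel₀ hc, C_1]
      linear_combination (p * q) * hcc

end Factorization

lemma irreducible_X_add_C (c : ℂ) : Irreducible (X + C c) :=
  irreducible_of_degree_eq_one (degree_X_add_C c)

lemma irreducible_X_sub_C_sub_one (c : ℂ) : Irreducible (X - C c - 1) := by
  rw [sub_sub, ← C_1, ← C_add]
  exact irreducible_X_sub_C _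

/-- classification of the rank-one Casimir representations of semi-level `μ`:
`(a₋₁·∇⁻¹, a₁·∇)` is a Casimir representation on `ℂ[z]` iff, for some `γ ∈ ℂ∖{0}`,
`(a₋₁, a₁)` is one of
(I) `(γ⁻¹, γ(z+μ+1)(z−μ))`, (II) `(γ⁻¹(z−μ−1), γ(z+μ+1))`,
(III) `(γ⁻¹(z+μ), γ(z−μ))`, (IV) `(γ⁻¹(z+μ)(z−μ−1), γ)`. -/
theorem stmt_10 (μ : ℂ) (am a1 : Polynomial ℂ) :
    IsCasimirRep μ (fun p : Polynomial ℂ => am * nabla.symm p)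
        (fun p : Polynomial ℂ => a1 * nabla p) ↔
      ∃ γ : ℂ, γ ≠ 0 ∧
        ((am = C γ⁻¹ ∧ a1 = C γ * ((X + C μ + 1) * (X - C μ))) ∨
         (am = C γ⁻¹ * (X - C μ - 1) ∧ a1 = C γ * (X + C μ + 1)) ∨
         (am = C γ⁻¹ * (X + C μ) ∧ a1 = C γ * (X - C μ)) ∨
         (am = C γ⁻¹ * ((X + C μ) * (X - C μ - 1)) ∧ a1 = C γ)) := by
  rw [isCasimirRep_mul_nabla_iff, piMu,
    mul_eq_mul_of_irreducible_iff (irreducible_X_add_C μ) (irreducible_X_sub_C_sub_one μ)]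
  simp only [AlgEquiv.symm_apply_eq, map_mul, nabla_C, nabla_X_add_C, nabla_X_sub_C_sub_one]
end
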